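/- Let X be a real Banach space and Y ⊆ X a closed subspace. Suppose the identity map from the unit sphere S(X*) with the weak* topology to S(X*) with the weak topology is continuous. Then the identity map from S(Y*) with the weak* topology to S(Y*) with the weak topology is also continuous. -/

import Mathlib

/-!
Let `T : F → E` be a contraction such that every functional on `F` lifts through `T` to a
functional on `E` of the same norm (for `T` the inclusion of a subspace this is Hahn–Banach).
Given `f ∈ S(F*)` and an ultrafilter `U` converging weak* to `f` on the sphere, lift `U` to the
sphere of `E*`. By Banach–Alaoglu the lift converges weak* to some `G` in the unit ball; since
the transpose `Tᵗ` is weak* continuous and inverts the lift, `Tᵗ G = f`, so `‖G‖ = 1`.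
The hypothesis on `E` upgrades the convergence to `G` to weak convergence, and `Tᵗ` is weakly
continuous, so `U` converges weakly to `Tᵗ G = f`.
-/

open Filter Topology

namespace WeakDual

variable {𝕜 E F : Type*} [NontriviallyNormedField 𝕜]
  [SeminormedAddCommGroup E] [NormedSpace 𝕜 E] [SeminormedAddCommGroup F] [NormedSpace 𝕜 F]

variable (𝕜 E) in
noncomputable def toWeakSpace (φ : WeakDual 𝕜 E) : WeakSpace 𝕜 (StrongDual 𝕜 E) :=
  _root_.toWeakSpace 𝕜 (StrongDual 𝕜 E) (toStrongDual φ)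

noncomputable def transpose (T : F →L[𝕜] E) (φ : WeakDual 𝕜 E) : WeakDual 𝕜 F :=
  StrongDual.toWeakDual ((toStrongDual φ).comp T)

theorem continuous_transpose (T : F →L[𝕜] E) : Continuous (transpose T) :=
  continuous_of_continuous_eval fun y => eval_continuous (T y)

theorem toWeakSpace_comp_transpose (T : F →L[𝕜] E) :
    toWeakSpace 𝕜 F ∘ transpose T =
      WeakSpace.map ((ContinuousLinearMap.compL 𝕜 F E 𝕜).flip T) ∘ toWeakSpace 𝕜 E :=
  rfl

theorem norm_transpose_le (T : F →L[𝕜] E) (hT : ‖T‖ ≤ 1) (φ : WeakDual 𝕜 E) :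
    ‖toStrongDual (transpose T φ)‖ ≤ ‖toStrongDual φ‖ :=
  calc ‖(toStrongDual φ).comp T‖ ≤ ‖toStrongDual φ‖ * ‖T‖ := (toStrongDual φ).opNorm_comp_le T
    _ ≤ ‖toStrongDual φ‖ := mul_le_of_le_one_right (norm_nonneg _) hT

theorem continuousOn_toWeakSpace_sphere_of_normPreservingLift [ProperSpace 𝕜]
    (T : F →L[𝕜] E) (hT : ‖T‖ ≤ 1)
    (hlift : ∀ φ : StrongDual 𝕜 F, ∃ ψ : StrongDual 𝕜 E, ψ.comp T = φ ∧ ‖ψ‖ = ‖φ‖)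
    (hE : ContinuousOn (toWeakSpace 𝕜 E) {φ | ‖toStrongDual φ‖ = 1}) :
    ContinuousOn (toWeakSpace 𝕜 F) {φ | ‖toStrongDual φ‖ = 1} := by
  choose lift hlift_comp hlift_norm using hlift
  set L : WeakDual 𝕜 F → WeakDual 𝕜 E := fun φ => StrongDual.toWeakDual (lift (toStrongDual φ))
  have transpose_comp_L : transpose T ∘ L = id := funext fun φ => congrArg _ (hlift_comp _)
  intro f hf
  rw [ContinuousWithinAt, tendsto_iff_ultrafilter]
  intro U hU
  have hU_sphere : ∀ᶠ φ in (U : Filter (WeakDual 𝕜 F)), ‖toStrongDual φ‖ = 1 :=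
    hU self_mem_nhdsWithin
  have hL_sphere : ∀ᶠ φ in (U : Filter (WeakDual 𝕜 F)), ‖toStrongDual (L φ)‖ = 1 := by
    filter_upwards [hU_sphere] with φ hφ
    exact (hlift_norm _).trans hφ
  obtain ⟨G, hG_ball, hUG⟩ := (isCompact_closedBall (0 : StrongDual 𝕜 E) 1).ultrafilter_le_nhds
    (U.map L) (le_principal_iff.mpr <| hL_sphere.mono fun φ hφ => by simp [hφ])
  have hLG : Tendsto L U (𝓝 G) := hUG
  have hG : transpose T G = f := by
    refine tendsto_nhds_unique ((continuous_transpose T).tendsto G |>.comp hLG) ?_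
    rw [transpose_comp_L]
    exact hU.trans nhdsWithin_le_nhds
  have hG_norm : ‖toStrongDual G‖ = 1 := by
    refine le_antisymm (by simpa using hG_ball) ?_
    calc (1 : ℝ) = ‖toStrongDual (transpose T G)‖ := by rw [hG]; exact hf.symm
      _ ≤ ‖toStrongDual G‖ := norm_transpose_le T hT G
  have hLG_weak := (hE G hG_norm).tendsto.comp (tendsto_nhdsWithin_iff.mpr ⟨hLG, hL_sphere⟩)
  have h := (WeakSpace.map ((ContinuousLinearMap.compL 𝕜 F E 𝕜).flip T)).continuous.tendsto _
    |>.comp hLG_weak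
  rwa [← Function.comp_assoc, ← toWeakSpace_comp_transpose, Function.comp_assoc,
    transpose_comp_L, Function.comp_id, ← Function.comp_apply (f := WeakSpace.map _),
    ← toWeakSpace_comp_transpose, Function.comp_apply, hG] at h

end WeakDual

theorem stmt_0 (X : Type*) [NormedAddCommGroup X] [NormedSpace ℝ X]
    (Y : Submodule ℝ X)
    (hX : ContinuousOn
      (fun f : WeakDual ℝ X =>
        toWeakSpace ℝ (StrongDual ℝ X) (StrongDual.toWeakDual.symm f))
      {f : WeakDual ℝ X | ‖StrongDual.toWeakDual.symm f‖ = 1}) :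
    ContinuousOn
      (fun f : WeakDual ℝ Y =>
        toWeakSpace ℝ (StrongDual ℝ Y) (StrongDual.toWeakDual.symm f))
      {f : WeakDual ℝ Y | ‖StrongDual.toWeakDual.symm f‖ = 1} := by
  refine WeakDual.continuousOn_toWeakSpace_sphere_of_normPreservingLift Y.subtypeL
    (Submodule.norm_subtypeL_le Y) (fun φ => ?_) hX
  obtain ⟨ψ, hψ, hψ_norm⟩ := exists_extension_norm_eq Y φ
  exact ⟨ψ, ContinuousLinearMap.ext hψ, hψ_norm⟩
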